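/- Let G be a finite group with supercharacter theory S. Then G is S-abelian if and only if (G,1) is an S-GCP. -/

import Mathlib

open scoped BigOperators Pointwise

/-- `f : G → ℂ` is an irreducible character of `G`. -/
def IsIrrChar (G : Type) [Group G] [Fintype G] (f : G → ℂ) : Prop :=
  ∃ V : FDRep ℂ G, CategoryTheory.Simple V ∧ V.character = f

/-- A supercharacter theory of a finite group `G` (Diaconis–Isaacs): a partition
`parts` of the set of irreducible characters of `G` together with a partition of `G`
into `S`-classes (`cls g` is the class of `g`), such that `{1}` is a class, the number
of parts equals the number of classes, and each supercharacter
`σ_X = ∑ χ ∈ X, χ(1)·χ` is constant on every class. -/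
structure SCT (G : Type) [Group G] [Fintype G] where
  parts : Finset (Finset (G → ℂ))
  cls : G → Set G
  parts_cover : ∀ f : G → ℂ, IsIrrChar G f ↔ ∃ X ∈ parts, f ∈ X
  parts_disj : ∀ X ∈ parts, ∀ Y ∈ parts, X ≠ Y → Disjoint X Y
  parts_nonempty : ∀ X ∈ parts, X.Nonempty
  mem_cls : ∀ g : G, g ∈ cls g
  cls_eq : ∀ g h : G, h ∈ cls g → cls h = cls g
  cls_one : cls (1 : G) = {1}
  card_eq : parts.card = Nat.card (Set.range cls)
  const : ∀ X ∈ parts, ∀ g h : G, h ∈ cls g →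
    (∑ χ ∈ X, χ 1 * χ h) = (∑ χ ∈ X, χ 1 * χ g)

variable {G : Type} [Group G] [Fintype G]

namespace SCT

/-- The supercharacter attached to a part `X`. -/
noncomputable def superchar (_S : SCT G) (X : Finset (G → ℂ)) : G → ℂ := fun g => ∑ χ ∈ X, χ 1 * χ g

/-- The set `Irr(S)` of `S`-characters. -/
def Irr (S : SCT G) : Set (G → ℂ) := {f | ∃ X ∈ S.parts, f = S.superchar X}

end SCT

/-- The kernel of a character-like function `f : G → ℂ`. -/
def charKer (f : G → ℂ) : Subgroup G where
  carrier := {g | ∀ h, f (g * h) = f h}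
  one_mem' := by intro h; simp
  mul_mem' := by intro a b ha hb h; rw [mul_assoc, ha, hb]
  inv_mem' := by
    intro a ha h
    have := ha (a⁻¹ * h)
    rw [mul_inv_cancel_left] at this
    exact this.symm

namespace SCT

/-- `[H,S]`, the subgroup generated by the `g⁻¹k` with `g ∈ H`, `k ∈ Cl_S(g)`. -/
def comm (S : SCT G) (H : Subgroup G) : Subgroup G :=
  Subgroup.closure {x | ∃ g ∈ H, ∃ k ∈ S.cls g, x = g⁻¹ * k}

/-- `[G,S]`. -/
def derived (S : SCT G) : Subgroup G := S.comm ⊤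

/-- `Irr(S | N)`: the `S`-characters whose kernel does not contain `N`. -/
def IrrRel (S : SCT G) (N : Subgroup G) : Set (G → ℂ) :=
  {f | f ∈ S.Irr ∧ ¬ N ≤ charKer f}

/-- `g` is an `S`-Camina element: all of `Irr(S | [G,S])` vanishes at `g`. -/
def IsCaminaElt (S : SCT G) (g : G) : Prop :=
  ∀ f ∈ S.IrrRel S.derived, f g = 0

/-- `N` is `S`-normal: a union of `S`-classes. -/
def IsNormal (S : SCT G) (N : Subgroup G) : Prop :=
  ∀ g ∈ N, S.cls g ⊆ N

/-- `(G,N)` is a generalised `S`-Camina pair. -/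
def IsGCP (S : SCT G) (N : Subgroup G) : Prop :=
  S.IsNormal N ∧ ∀ g : G, g ∉ N → S.IsCaminaElt g

/-- The set `Z(S)` of elements with singleton `S`-class. -/
def centerSet (S : SCT G) : Set G := {g | S.cls g = {g}}

/-- The vanishing-off subgroup `V(S | N)`. -/
def V (S : SCT G) (N : Subgroup G) : Subgroup G :=
  Subgroup.closure {g | ∃ f ∈ S.IrrRel N, f g ≠ 0}

/-- `V(S) = V(S | [G,S])`. -/
def VS (S : SCT G) : Subgroup G := S.V S.derived

/-- `U(S | N)`: the product of all `S`-normal subgroups `H` with `V(S | H) ≤ N`. -/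
def U (S : SCT G) (N : Subgroup G) : Subgroup G :=
  ⨆ (H : Subgroup G) (_ : S.IsNormal H ∧ S.V H ≤ N), H

/-- The upper `S`-central series: `ζ_0 = 1` and `ζ_{i+1}/ζ_i = Z(S^{G/ζ_i})`,
i.e. `ζ_{i+1}` consists of the `g` whose `S`-class maps onto the single coset `gζ_i`. -/
def zeta (S : SCT G) : ℕ → Subgroup G
  | 0 => ⊥
  | i + 1 => Subgroup.closure {g | ∀ k ∈ S.cls g, g⁻¹ * k ∈ S.zeta i}

/-- The lower `S`-central series `γ_1 = G`, `γ_{i+1} = [γ_i, S]` (with `γ_0 := G`). -/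
def gamma (S : SCT G) : ℕ → Subgroup G
  | 0 => ⊤
  | 1 => ⊤
  | n + 2 => S.comm (S.gamma (n + 1))

/-- The series `V_1(S) = V(S)`, `V_{i+1}(S) = [V_i(S), S]` (with `V_0 := V(S)`). -/
def Vseq (S : SCT G) : ℕ → Subgroup G
  | 0 => S.VS
  | 1 => S.VS
  | n + 2 => S.comm (S.Vseq (n + 1))

/-- `G` is a `VZ(S)`-group: every member of `Irr(S | [G,S])` vanishes off `Z(S)`. -/
def IsVZ (S : SCT G) : Prop :=
  ∀ f ∈ S.IrrRel S.derived, ∀ g : G, g ∉ S.centerSet → f g = 0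

end SCT

/-! Supercharacters are orthogonal for `⟨σ, τ⟩ = ∑ g, σ g * τ g⁻¹`, so they are linearly
independent as functions on the set of `S`-classes; since there are as many of them as
classes, they separate the classes. If `[G,S] ≠ 1`, pick `z ≠ 1` in it and a supercharacter
`σ_X` with `σ_X z ≠ σ_X 1`: then `[G,S]` is not in its kernel, so if every `g ≠ 1` is an
`S`-Camina element, `σ_X` vanishes off `1`. But then `⟨σ_X, σ_Y⟩ = σ_X 1 * σ_Y 1 ≠ 0` for any
other part `Y`, contradicting orthogonality. Conversely `[G,S] = 1` leaves `Irr(S | [G,S])`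
empty, and `[G,S] = 1` says exactly that all `S`-classes are singletons. -/

open scoped Classical

namespace FDRep

variable (V W : FDRep ℂ G) [CategoryTheory.Simple V] [CategoryTheory.Simple W]

theorem sum_char_mul_char_inv :
    ∑ g, V.character g * W.character g⁻¹ =
      if Nonempty (V ≅ W) then (Nat.card G : ℂ) else 0 := by
  have hG : (Nat.card G : ℂ) ≠ 0 := Nat.cast_ne_zero.mpr Nat.card_pos.ne'
  let _ := invertibleOfNonzero hG
  have h := char_orthonormal V W
  rw [inv_mul_eq_iff_eq_mul₀ hG] at h
  simpa using h

theorem nonempty_iso_iff_character_eq : Nonempty (V ≅ W) ↔ V.character = W.character := by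
  refine ⟨fun ⟨i⟩ => char_iso i, fun h => by_contra fun hVW => ?_⟩
  have hVV := sum_char_mul_char_inv V V
  rw [if_pos ⟨CategoryTheory.Iso.refl V⟩] at hVV
  have hVW' := sum_char_mul_char_inv V W
  rw [if_neg hVW, ← h, hVV] at hVW'
  exact Nat.cast_ne_zero.mpr Nat.card_pos.ne' hVW'

end FDRep

namespace IsIrrChar

theorem sum_mul_apply_inv {f f' : G → ℂ} (hf : IsIrrChar G f) (hf' : IsIrrChar G f') :
    ∑ g, f g * f' g⁻¹ = if f = f' then (Nat.card G : ℂ) else 0 := by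
  obtain ⟨V, _, rfl⟩ := hf
  obtain ⟨W, _, rfl⟩ := hf'
  simp only [FDRep.sum_char_mul_char_inv, FDRep.nonempty_iso_iff_character_eq]

theorem exists_pos_natCast_eq_apply_one {f : G → ℂ} (hf : IsIrrChar G f) :
    ∃ d : ℕ, 0 < d ∧ f 1 = d := by
  obtain ⟨V, _, rfl⟩ := id hf
  refine ⟨Module.finrank ℂ V, Nat.pos_of_ne_zero fun h0 => ?_, FDRep.char_one V⟩
  have : Subsingleton V := Module.finrank_zero_iff.mp h0
  have hzero : V.character = 0 := funext fun g => by
    rw [FDRep.character, Subsingleton.elim (V.ρ g) 0, map_zero, Pi.zero_apply]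
  have hnorm := hf.sum_mul_apply_inv hf
  simp only [hzero, Pi.zero_apply, zero_mul, Finset.sum_const_zero, if_true] at hnorm
  exact Nat.cast_ne_zero.mpr Nat.card_pos.ne' hnorm.symm

end IsIrrChar

namespace SCT

variable (S : SCT G)

theorem isIrrChar_of_mem_part {X : Finset (G → ℂ)} (hX : X ∈ S.parts) {χ : G → ℂ}
    (hχ : χ ∈ X) :
    IsIrrChar G χ :=
  (S.parts_cover χ).mpr ⟨X, hX, hχ⟩

theorem superchar_apply_one_ne_zero {X : Finset (G → ℂ)} (hX : X ∈ S.parts) :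
    S.superchar X 1 ≠ 0 := by
  have hpos : 0 < (S.superchar X 1).re := by
    rw [superchar, Complex.re_sum]
    refine Finset.sum_pos (fun χ hχ => ?_) (S.parts_nonempty X hX)
    obtain ⟨d, hd, hχ1⟩ := (S.isIrrChar_of_mem_part hX hχ).exists_pos_natCast_eq_apply_one
    rw [hχ1, ← Nat.cast_mul, Complex.natCast_re]
    exact_mod_cast Nat.mul_pos hd hd
  exact fun h => hpos.ne' (by rw [h, Complex.zero_re])

theorem sum_superchar_mul_superchar_inv {X Y : Finset (G → ℂ)} (hX : X ∈ S.parts)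
    (hY : Y ∈ S.parts) :
    ∑ g, S.superchar X g * S.superchar Y g⁻¹ =
      if X = Y then Nat.card G * S.superchar X 1 else 0 := by
  have hexpand : ∑ g, S.superchar X g * S.superchar Y g⁻¹ =
      Nat.card G * ∑ χ ∈ X ∩ Y, χ 1 * χ 1 :=
    calc ∑ g, S.superchar X g * S.superchar Y g⁻¹
        = ∑ χ ∈ X, ∑ ψ ∈ Y, χ 1 * ψ 1 * ∑ g, χ g * ψ g⁻¹ := by
          simp only [superchar, Finset.sum_mul, Finset.mul_sum]
          rw [Finset.sum_comm, Finset.sum_comm (s := X)]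
          refine Finset.sum_congr rfl fun ψ _ => ?_
          rw [Finset.sum_comm]
          exact Finset.sum_congr rfl fun χ _ => Finset.sum_congr rfl fun g _ => by ring
      _ = ∑ χ ∈ X, ∑ ψ ∈ Y, if χ = ψ then Nat.card G * (χ 1 * χ 1) else 0 := by
          refine Finset.sum_congr rfl fun χ hχ => Finset.sum_congr rfl fun ψ hψ => ?_
          rw [(S.isIrrChar_of_mem_part hX hχ).sum_mul_apply_inv (S.isIrrChar_of_mem_part hY hψ)]
          split_ifs with h
          · rw [h]; ring
          · rw [mul_zero]
      _ = Nat.card G * ∑ χ ∈ X ∩ Y, χ 1 * χ 1 := by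
          simp only [Finset.sum_ite_eq, ← Finset.sum_filter, Finset.filter_mem_eq_inter,
            Finset.mul_sum]
  rw [hexpand]
  split_ifs with h
  · rw [h, Finset.inter_self, superchar]
  · rw [Finset.disjoint_iff_inter_eq_empty.mp (S.parts_disj X hX Y hY h), Finset.sum_empty,
      mul_zero]

noncomputable def classSuperchar (X : Finset (G → ℂ)) : Set.range S.cls → ℂ :=
  fun t => S.superchar X (Set.rangeSplitting S.cls t)

theorem classSuperchar_cls {X : Finset (G → ℂ)} (hX : X ∈ S.parts) (g : G) :
    S.classSuperchar X ⟨S.cls g, g, rfl⟩ = S.superchar X g := by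
  refine S.const X hX g _ ?_
  have hrep := S.mem_cls (Set.rangeSplitting S.cls ⟨S.cls g, g, rfl⟩)
  rwa [Set.apply_rangeSplitting S.cls] at hrep

theorem linearIndependent_classSuperchar :
    LinearIndependent ℂ fun X : S.parts => S.classSuperchar X := by
  rw [Fintype.linearIndependent_iff]
  intro c hc Y
  have hvanish : ∀ g, ∑ X : S.parts, c X * S.superchar X g = 0 := fun g => by
    simpa [classSuperchar_cls] using congrFun hc ⟨S.cls g, g, rfl⟩
  have horth : ∑ X : S.parts, c X * ∑ g, S.superchar X g * S.superchar Y g⁻¹ = 0 := by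
    simp only [Finset.mul_sum, ← mul_assoc]
    rw [Finset.sum_comm]
    simp only [← Finset.sum_mul, hvanish, zero_mul, Finset.sum_const_zero]
  rw [Finset.sum_eq_single_of_mem Y (Finset.mem_univ Y) fun X _ hXY => by
    rw [S.sum_superchar_mul_superchar_inv X.2 Y.2, if_neg (Subtype.coe_ne_coe.mpr hXY),
      mul_zero]] at horth
  rw [S.sum_superchar_mul_superchar_inv Y.2 Y.2, if_pos rfl] at horth
  exact (mul_eq_zero.mp horth).resolve_right
    (mul_ne_zero (Nat.cast_ne_zero.mpr Nat.card_pos.ne') (S.superchar_apply_one_ne_zero Y.2))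

theorem span_classSuperchar :
    Submodule.span ℂ (Set.range fun X : S.parts => S.classSuperchar X) = ⊤ := by
  refine S.linearIndependent_classSuperchar.span_eq_top_of_card_eq_finrank' ?_
  rw [Module.finrank_fintype_fun_eq_card, Fintype.card_coe, S.card_eq, Nat.card_eq_fintype_card]

theorem exists_superchar_ne_of_cls_ne {a b : G} (hab : S.cls a ≠ S.cls b) :
    ∃ X ∈ S.parts, S.superchar X a ≠ S.superchar X b := by
  by_contra! hsame
  let ta : Set.range S.cls := ⟨S.cls a, a, rfl⟩
  let tb : Set.range S.cls := ⟨S.cls b, b, rfl⟩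
  have hφ : LinearMap.proj ta = (LinearMap.proj tb : (Set.range S.cls → ℂ) →ₗ[ℂ] ℂ) :=
    LinearMap.ext_on_range S.span_classSuperchar fun X =>
      (S.classSuperchar_cls X.2 a).trans ((hsame X X.2).trans (S.classSuperchar_cls X.2 b).symm)
  have hne : ta ≠ tb := fun h => hab (congrArg Subtype.val h)
  simpa [hne] using LinearMap.congr_fun hφ (Pi.single ta 1)

theorem one_lt_card_parts_of_cls_ne {a b : G} (hab : S.cls a ≠ S.cls b) : 1 < S.parts.card := by
  rw [S.card_eq, Finite.one_lt_card_iff_nontrivial]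
  exact ⟨⟨S.cls a, a, rfl⟩, ⟨S.cls b, b, rfl⟩, fun h => hab (congrArg Subtype.val h)⟩

theorem exists_ne_one_superchar_ne_zero {X Y : Finset (G → ℂ)} (hX : X ∈ S.parts)
    (hY : Y ∈ S.parts) (hXY : X ≠ Y) : ∃ g ≠ 1, S.superchar X g ≠ 0 := by
  by_contra! hvanish
  have horth := S.sum_superchar_mul_superchar_inv hX hY
  rw [if_neg hXY, Finset.sum_eq_single_of_mem 1 (Finset.mem_univ 1) fun g _ hg => by
    rw [hvanish g hg, zero_mul], inv_one] at horth
  exact mul_ne_zero (S.superchar_apply_one_ne_zero hX) (S.superchar_apply_one_ne_zero hY) horth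

theorem isNormal_bot : S.IsNormal ⊥ := by
  intro g hg
  rw [Subgroup.mem_bot.mp hg, S.cls_one, Set.singleton_subset_iff]
  exact Subgroup.one_mem ⊥

theorem derived_eq_bot_iff : S.derived = ⊥ ↔ S.centerSet = Set.univ := by
  constructor
  · refine fun h => Set.eq_univ_of_forall fun g => ?_
    refine Set.eq_singleton_iff_unique_mem.mpr ⟨S.mem_cls g, fun k hk => ?_⟩
    have hgk : g⁻¹ * k ∈ S.derived := Subgroup.subset_closure ⟨g, trivial, k, hk, rfl⟩
    rw [h, Subgroup.mem_bot, inv_mul_eq_one] at hgk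
    exact hgk.symm
  · intro h
    rw [eq_bot_iff, derived, comm, Subgroup.closure_le]
    rintro _ ⟨g, -, k, hk, rfl⟩
    have hg : S.cls g = {g} := (h ▸ Set.mem_univ g : g ∈ S.centerSet)
    rw [hg, Set.mem_singleton_iff] at hk
    rw [hk, inv_mul_cancel]
    exact Subgroup.one_mem ⊥

theorem isCaminaElt_of_derived_eq_bot (h : S.derived = ⊥) (g : G) : S.IsCaminaElt g :=
  fun _ hf => absurd (h ▸ bot_le) hf.2

theorem derived_eq_bot_of_isCaminaElt (h : ∀ g : G, g ≠ 1 → S.IsCaminaElt g) :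
    S.derived = ⊥ := by
  refine (Subgroup.eq_bot_iff_forall _).mpr fun z hz => by_contra fun hz1 => ?_
  have hcls : S.cls z ≠ S.cls 1 := fun e => hz1 (by simpa [S.cls_one, e] using S.mem_cls z)
  obtain ⟨X, hX, hXz⟩ := S.exists_superchar_ne_of_cls_ne hcls
  have hrel : S.superchar X ∈ S.IrrRel S.derived :=
    ⟨⟨X, hX, rfl⟩, fun hker => hXz (by simpa using hker hz 1)⟩
  obtain ⟨Y, hY, hYX⟩ := Finset.exists_mem_ne (S.one_lt_card_parts_of_cls_ne hcls) X
  obtain ⟨g, hg1, hg⟩ := S.exists_ne_one_superchar_ne_zero hX hY hYX.symm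
  exact hg (h g hg1 _ hrel)

end SCT

/-- `G` is `S`-abelian iff `(G,1)` is an `S`-GCP. -/
theorem sAbelian_iff_isGCP_bot (S : SCT G) :
    S.centerSet = Set.univ ↔ S.IsGCP ⊥ := by
  rw [← S.derived_eq_bot_iff]
  refine ⟨fun h => ⟨S.isNormal_bot, fun g _ => S.isCaminaElt_of_derived_eq_bot h g⟩,
    fun ⟨_, h⟩ => S.derived_eq_bot_of_isCaminaElt fun g hg => h g ?_⟩
  simpa using hg
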